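/- Let n ≥ 1, let Sⁿ = {θ ∈ ℝⁿ : θᵢ ≥ 0 for all i, θ₁ + ⋯ + θₙ = 1} be the standard simplex, let μ : ℝⁿ → ℝ and σ² : ℝⁿ → ℝ be continuous with σ²(θ) ≥ 0 on Sⁿ, and define β(φ) = min_{θ ∈ Sⁿ} { −μ(θ) + (φ/2) σ²(θ) }. Let T > 0 and let V : ℝ × [0,T] → ℝ be such that ∂_t V, ∂_x V, ∂_x² V, ∂_x³ V, ∂_x⁴ V and the mixed derivatives ∂_t ∂_x V, ∂_t ∂_x² V exist and are continuous, ∂_x V(x,t) > 0 for all (x,t), and V solves the Hamilton–Jacobi–Bellman equation ∂_t V + max_{θ ∈ Sⁿ} { (μ(θ) − (1/2) σ²(θ)) ∂_x V + (1/2) σ²(θ) ∂_x² V } = 0 on ℝ × [0,T). Assume moreover that β is twice continuously differentiable. Then the function φ(x,t) := 1 − ∂_x² V(x,t)/∂_x V(x,t) satisfies the quasilinear parabolic equation ∂_t φ + ∂_x² β(φ) + ∂_x [ (1 − φ) β(φ) ] = 0 for all x ∈ ℝ and t ∈ [0,T). -/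

import Mathlib

/-!
Since `∂_x V > 0`, the Hamiltonian in the HJB equation is `-∂_x V` times the objective defining
`β` at `φ = 1 - ∂_x² V / ∂_x V`, so the HJB equation reads `∂_t V = ∂_x V · β(φ)`. Differentiating
in `x` and dividing by `∂_x V` gives `∂_t ∂_x V / ∂_x V = ∂_x β(φ) + (1 - φ) β(φ)`. As
`1 - φ = ∂_x log ∂_x V`, we have `∂_t φ = -∂_x (∂_t ∂_x V / ∂_x V)`, and one more `x`-derivative of
the previous identity gives the equation.

The interchanges `∂_x ∂_t = ∂_t ∂_x` are justified on the closed strip `ℝ × [0, T]`, boundary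
included, by writing `V(y, s) - V(x, s)` as an integral in `x` and differentiating under the
integral sign in `s` via Fubini and the fundamental theorem of calculus.
-/

open Set MeasureTheory intervalIntegral
open scoped Pointwise

/-- The diffusion function of the transformed HJB equation:
`β(φ) = min_{θ ∈ Sⁿ} { −μ(θ) + (φ/2) σ²(θ) }` over the standard simplex. -/
noncomputable def betaHJB (n : ℕ) (μ σ2 : (Fin n → ℝ) → ℝ) (φ : ℝ) : ℝ :=
  sInf ((fun θ => -μ θ + (φ / 2) * σ2 θ) '' stdSimplex ℝ (Fin n))

theorem sSup_hamiltonian_eq_neg_mul_betaHJB (n : ℕ) (μ σ2 : (Fin n → ℝ) → ℝ) {p : ℝ}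
    (hp : 0 < p) (q : ℝ) :
    sSup ((fun θ => (μ θ - (1 / 2) * σ2 θ) * p + (1 / 2) * σ2 θ * q) '' stdSimplex ℝ (Fin n)) =
      -(p * betaHJB n μ σ2 (1 - q / p)) := by
  have himage : (fun θ => (μ θ - (1 / 2) * σ2 θ) * p + (1 / 2) * σ2 θ * q) ''
      stdSimplex ℝ (Fin n) =
        -(p • (fun θ => -μ θ + ((1 - q / p) / 2) * σ2 θ) '' stdSimplex ℝ (Fin n)) := by
    rw [← image_smul, ← image_neg_eq_neg, image_image, image_image]
    refine image_congr fun θ _ => ?_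
    have hpq : p * (q / p) = q := mul_div_cancel₀ q hp.ne'
    simp only [smul_eq_mul]
    linear_combination -(σ2 θ / 2) * hpq
  rw [himage, Real.sSup_neg, Real.sInf_smul_of_nonneg hp.le, betaHJB, smul_eq_mul]

theorem hasDerivWithinAt_intervalIntegral_of_continuousOn {F G : ℝ → ℝ → ℝ} {a b x y t : ℝ}
    (hab : a ≤ b) (hF : ∀ z, ∀ s ∈ Icc a b, HasDerivAt (F z ·) (G z s) s)
    (hFcont : ∀ s ∈ Icc a b, Continuous (F · s))
    (hG : ContinuousOn (fun p : ℝ × ℝ => G p.1 p.2) (univ ×ˢ Icc a b)) (ht : t ∈ Icc a b) :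
    HasDerivWithinAt (fun s => ∫ z in x..y, F z s) (∫ z in x..y, G z t) (Icc a b) t := by
  set G' : ℝ → ℝ → ℝ := fun z r => G z (projIcc a b hab r)
  have hG' : Continuous fun p : ℝ × ℝ => G' p.1 p.2 :=
    hG.comp_continuous (continuous_fst.prodMk
      (continuous_subtype_val.comp ((continuous_projIcc (h := hab)).comp continuous_snd)))
      fun p => ⟨trivial, (projIcc a b hab p.2).2⟩
  have hG'_eq : ∀ z, ∀ s ∈ Icc a b, G' z s = G z s := fun z s hs => by
    simp [G', projIcc_of_mem hab hs]
  have hrepr : ∀ s ∈ Icc a b,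
      ∫ z in x..y, F z s = (∫ z in x..y, F z t) + ∫ r in t..s, ∫ z in x..y, G' z r := by
    intro s hs
    have hFTC : ∀ z, F z s = F z t + ∫ r in t..s, G' z r := fun z => by
      have hG'z : Continuous (G' z) := hG'.comp (continuous_const.prodMk continuous_id)
      rw [integral_eq_sub_of_hasDerivAt (fun r hr => ?_) (hG'z.intervalIntegrable t s)]
      · ring
      have hr' := ordConnected_Icc.uIcc_subset ht hs hr
      rw [hG'_eq z r hr']
      exact hF z r hr'
    calc ∫ z in x..y, F z s = ∫ z in x..y, (F z t + ∫ r in t..s, G' z r) :=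
          integral_congr fun z _ => hFTC z
      _ = (∫ z in x..y, F z t) + ∫ z in x..y, ∫ r in t..s, G' z r := by
          have hint : Continuous fun z => ∫ r in t..s, G' z r :=
            continuous_parametric_intervalIntegral_of_continuous' hG' t s
          exact integral_add ((hFcont t ht).intervalIntegrable _ _) (hint.intervalIntegrable _ _)
      _ = _ := by
        rw [intervalIntegral_intervalIntegral_swap]
        exact (hG'.continuousOn.integrableOn_compact (isCompact_uIcc.prod isCompact_uIcc)).mono_set
          (prod_mono uIoc_subset_uIcc uIoc_subset_uIcc)
  have hG'swap : Continuous fun p : ℝ × ℝ => G' p.2 p.1 := hG'.comp continuous_swap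
  have hH : Continuous fun r => ∫ z in x..y, G' z r :=
    continuous_parametric_intervalIntegral_of_continuous' (f := fun r z => G' z r) hG'swap x y
  rw [← integral_congr fun z _ => hG'_eq z t ht]
  exact ((hH.integral_hasStrictDerivAt t t).hasDerivAt.const_add
    (∫ z in x..y, F z t)).hasDerivWithinAt.congr hrepr (hrepr t ht)

theorem hasDerivAt_mixed_partial_of_continuousOn {g gx gt gtx : ℝ → ℝ → ℝ} {a b t : ℝ}
    (hab : a < b) (hgx : ∀ y, ∀ s ∈ Icc a b, HasDerivAt (g · s) (gx y s) y)
    (hgxcont : ∀ s ∈ Icc a b, Continuous (gx · s))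
    (hgt : ∀ y, ∀ s ∈ Icc a b, HasDerivAt (g y ·) (gt y s) s)
    (hgtx : ∀ y, ∀ s ∈ Icc a b, HasDerivAt (gx y ·) (gtx y s) s)
    (hc : ContinuousOn (fun p : ℝ × ℝ => gtx p.1 p.2) (univ ×ˢ Icc a b)) (ht : t ∈ Icc a b)
    (x : ℝ) : HasDerivAt (gt · t) (gtx x t) x := by
  have hincr : ∀ y, gt y t = gt x t + ∫ z in x..y, gtx z t := by
    intro y
    have hsub : HasDerivWithinAt (fun s => g y s - g x s) (gt y t - gt x t) (Icc a b) t :=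
      ((hgt y t ht).sub (hgt x t ht)).hasDerivWithinAt
    have hint : EqOn (fun s => g y s - g x s) (fun s => ∫ z in x..y, gx z s) (Icc a b) :=
      fun s hs => (integral_eq_sub_of_hasDerivAt (fun z _ => hgx z s hs)
        ((hgxcont s hs).intervalIntegrable x y)).symm
    have := (uniqueDiffOn_Icc hab t ht).eq_deriv _ hsub
      ((hasDerivWithinAt_intervalIntegral_of_continuousOn hab.le hgtx hgxcont hc ht).congr
        hint (hint ht))
    linarith
  have hslice : Continuous (gtx · t) :=
    hc.comp_continuous (continuous_id.prodMk continuous_const) fun _ => ⟨trivial, ht⟩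
  rw [funext hincr]
  simpa using (hslice.integral_hasStrictDerivAt x x).hasDerivAt.const_add (gt x t)

/-- `φ = 1 - ∂_x² V / ∂_x V` for `u = ∂_x V(·, t)`. -/
noncomputable def riccatiTransform (u : ℝ → ℝ) (y : ℝ) : ℝ := 1 - deriv u y / u y

theorem hasDerivAt_riccatiTransform {u : ℝ → ℝ → ℝ} {x t a b : ℝ}
    (hu : HasDerivAt (fun s => u s x) a t) (hu' : HasDerivAt (fun s => deriv (u s) x) b t)
    (hu0 : u t x ≠ 0) :
    HasDerivAt (fun s => riccatiTransform (u s) x)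
      ((deriv (u t) x * a - u t x * b) / u t x ^ 2) t := by
  refine ((hu'.div hu hu0).const_sub 1).congr_deriv ?_
  ring

/-- With `u = ∂_x V(·, t)` and `a = ∂_t ∂_x V(·, t)`, the first summand is `∂_t φ(x, t)`. -/
theorem riccatiTransform_identity {β u a : ℝ → ℝ} (hβ : Differentiable ℝ β)
    (hu : Differentiable ℝ u) (hu' : Differentiable ℝ (deriv u)) (hu0 : ∀ y, u y ≠ 0)
    (ha : Differentiable ℝ a)
    (hflux : ∀ y, HasDerivAt (fun z => u z * β (riccatiTransform u z)) (a y) y) (x : ℝ) :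
    (deriv u x * a x - u x * deriv a x) / u x ^ 2 +
        deriv (deriv fun y => β (riccatiTransform u y)) x +
        deriv (fun y => (1 - riccatiTransform u y) * β (riccatiTransform u y)) x = 0 := by
  set ψ := riccatiTransform u
  have hψ : Differentiable ℝ ψ := fun y =>
    (differentiableAt_const 1).sub ((hu' y).div (hu y) (hu0 y))
  have hβψ : Differentiable ℝ fun y => β (ψ y) := fun y => (hβ _).comp y (hψ y)
  have hflux_eq : deriv (fun y => β (ψ y)) = fun y => a y / u y - (1 - ψ y) * β (ψ y) := by
    funext y
    have h := (hflux y).unique ((hu y).hasDerivAt.mul (hβψ y).hasDerivAt)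
    have h1ψ : 1 - ψ y = deriv u y / u y := by simp [ψ, riccatiTransform]
    rw [h1ψ, h]
    field_simp [hu0 y]
    ring
  have hdiv : HasDerivAt (fun y => a y / u y) ((deriv a x * u x - a x * deriv u x) / u x ^ 2) x :=
    (ha x).hasDerivAt.div (hu x).hasDerivAt (hu0 x)
  have hE : DifferentiableAt ℝ (fun y => (1 - ψ y) * β (ψ y)) x :=
    ((differentiableAt_const 1).fun_sub (hψ x)).fun_mul (hβψ x)
  rw [hflux_eq, deriv_fun_sub hdiv.differentiableAt hE, hdiv.deriv]
  ring

theorem hjb_riccati_transformation_general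
    (n : ℕ)
    (μ σ2 : (Fin n → ℝ) → ℝ)
    (T : ℝ) (hT : 0 < T)
    (V : ℝ → ℝ → ℝ)
    -- existence of the partial derivatives ∂_t V, ∂_x V, ∂_x² V, ∂_x³ V, ∂_x⁴ V
    -- and of the mixed derivatives ∂_t ∂_x V, ∂_t ∂_x² V on ℝ × [0,T]
    (hdiff : ∀ x : ℝ, ∀ t ∈ Set.Icc (0 : ℝ) T,
      DifferentiableAt ℝ (fun s => V x s) t ∧
      DifferentiableAt ℝ (fun y => V y t) x ∧
      DifferentiableAt ℝ (deriv (fun y => V y t)) x ∧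
      DifferentiableAt ℝ (deriv (deriv (fun y => V y t))) x ∧
      DifferentiableAt ℝ (deriv (deriv (deriv (fun y => V y t)))) x ∧
      DifferentiableAt ℝ (fun s => deriv (fun y => V y s) x) t ∧
      DifferentiableAt ℝ (fun s => deriv (deriv (fun y => V y s)) x) t)
    -- continuity of those partial derivatives on ℝ × [0,T]
    (hcont_tx : ContinuousOn
      (fun p : ℝ × ℝ => deriv (fun s => deriv (fun y => V y s) p.1) p.2)
      (Set.univ ×ˢ Set.Icc 0 T))
    (hcont_txx : ContinuousOn
      (fun p : ℝ × ℝ => deriv (fun s => deriv (deriv (fun y => V y s)) p.1) p.2)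
      (Set.univ ×ˢ Set.Icc 0 T))
    -- positivity of ∂_x V
    (hVxpos : ∀ x : ℝ, ∀ t ∈ Set.Icc (0 : ℝ) T, 0 < deriv (fun y => V y t) x)
    -- V solves the HJB equation on ℝ × [0,T)
    (hHJB : ∀ x : ℝ, ∀ t ∈ Set.Ico (0 : ℝ) T,
      deriv (fun s => V x s) t +
        sSup ((fun θ => (μ θ - (1 / 2) * σ2 θ) * deriv (fun y => V y t) x +
          (1 / 2) * σ2 θ * deriv (deriv (fun y => V y t)) x) ''
            stdSimplex ℝ (Fin n)) = 0)
    -- β is assumed twice continuously differentiable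
    (hβ : ContDiff ℝ 2 (betaHJB n μ σ2))
    -- φ is the Riccati transform
    (φ : ℝ → ℝ → ℝ)
    (hφ : ∀ x t : ℝ, φ x t =
      1 - deriv (deriv (fun y => V y t)) x / deriv (fun y => V y t) x) :
    ∀ x : ℝ, ∀ t ∈ Set.Ico (0 : ℝ) T,
      deriv (fun s => φ x s) t +
        deriv (deriv (fun y => betaHJB n μ σ2 (φ y t))) x +
        deriv (fun y => (1 - φ y t) * betaHJB n μ σ2 (φ y t)) x = 0 := by
  intro x t ht
  obtain rfl : φ = fun x t => riccatiTransform (deriv fun y => V y t) x := funext₂ hφ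
  have htI : t ∈ Icc 0 T := Ico_subset_Icc_self ht
  have hVtx : ∀ y, HasDerivAt (fun z => deriv (fun s => V z s) t)
      (deriv (fun s => deriv (fun z => V z s) y) t) y :=
    hasDerivAt_mixed_partial_of_continuousOn hT (fun y s hs => (hdiff y s hs).2.1.hasDerivAt)
      (fun s hs => continuous_iff_continuousAt.2 fun y => (hdiff y s hs).2.2.1.continuousAt)
      (fun y s hs => (hdiff y s hs).1.hasDerivAt)
      (fun y s hs => (hdiff y s hs).2.2.2.2.2.1.hasDerivAt) hcont_tx htI
  have hVxtx : ∀ y, HasDerivAt (fun z => deriv (fun s => deriv (fun z' => V z' s) z) t)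
      (deriv (fun s => deriv (deriv fun z => V z s) y) t) y :=
    hasDerivAt_mixed_partial_of_continuousOn hT (fun y s hs => (hdiff y s hs).2.2.1.hasDerivAt)
      (fun s hs => continuous_iff_continuousAt.2 fun y => (hdiff y s hs).2.2.2.1.continuousAt)
      (fun y s hs => (hdiff y s hs).2.2.2.2.2.1.hasDerivAt)
      (fun y s hs => (hdiff y s hs).2.2.2.2.2.2.hasDerivAt) hcont_txx htI
  have hVt : (fun z => deriv (fun s => V z s) t) = fun z =>
      deriv (fun y => V y t) z * betaHJB n μ σ2 (riccatiTransform (deriv fun y => V y t) z) := by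
    funext z
    have h := hHJB z t ht
    rw [sSup_hamiltonian_eq_neg_mul_betaHJB n μ σ2 (hVxpos z t htI)] at h
    rw [riccatiTransform]
    linarith
  have hφt := hasDerivAt_riccatiTransform (u := fun s => deriv fun y => V y s)
    (hdiff x t htI).2.2.2.2.2.1.hasDerivAt (hdiff x t htI).2.2.2.2.2.2.hasDerivAt
    (hVxpos x t htI).ne'
  rw [hφt.deriv, ← (hVxtx x).deriv]
  exact riccatiTransform_identity (hβ.differentiable (by norm_num))
    (fun y => (hdiff y t htI).2.2.1) (fun y => (hdiff y t htI).2.2.2.1)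
    (fun y => (hVxpos y t htI).ne') (fun y => (hVxtx y).differentiableAt)
    (fun y => hVt ▸ hVtx y) x

/-- Riccati transformation of the Hamilton–Jacobi–Bellman equation: if `V` solves
`∂_t V + max_{θ ∈ Sⁿ} { (μ(θ) − σ²(θ)/2) ∂_x V + (σ²(θ)/2) ∂_x² V } = 0` with
`∂_x V > 0`, then `φ = 1 − ∂_x² V / ∂_x V` solves the quasilinear equation
`∂_t φ + ∂_x² β(φ) + ∂_x [(1 − φ) β(φ)] = 0`. -/
theorem hjb_riccati_transformation
    (n : ℕ) (hn : 1 ≤ n)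
    (μ σ2 : (Fin n → ℝ) → ℝ) (hμ : Continuous μ) (hσ2 : Continuous σ2)
    (hσ2nonneg : ∀ θ ∈ stdSimplex ℝ (Fin n), 0 ≤ σ2 θ)
    (T : ℝ) (hT : 0 < T)
    (V : ℝ → ℝ → ℝ)
    -- existence of the partial derivatives ∂_t V, ∂_x V, ∂_x² V, ∂_x³ V, ∂_x⁴ V
    -- and of the mixed derivatives ∂_t ∂_x V, ∂_t ∂_x² V on ℝ × [0,T]
    (hdiff : ∀ x : ℝ, ∀ t ∈ Set.Icc (0 : ℝ) T,
      DifferentiableAt ℝ (fun s => V x s) t ∧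
      DifferentiableAt ℝ (fun y => V y t) x ∧
      DifferentiableAt ℝ (deriv (fun y => V y t)) x ∧
      DifferentiableAt ℝ (deriv (deriv (fun y => V y t))) x ∧
      DifferentiableAt ℝ (deriv (deriv (deriv (fun y => V y t)))) x ∧
      DifferentiableAt ℝ (fun s => deriv (fun y => V y s) x) t ∧
      DifferentiableAt ℝ (fun s => deriv (deriv (fun y => V y s)) x) t)
    -- continuity of those partial derivatives on ℝ × [0,T]
    (hcont_t : ContinuousOn (fun p : ℝ × ℝ => deriv (fun s => V p.1 s) p.2)
      (Set.univ ×ˢ Set.Icc 0 T))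
    (hcont_x : ContinuousOn (fun p : ℝ × ℝ => deriv (fun y => V y p.2) p.1)
      (Set.univ ×ˢ Set.Icc 0 T))
    (hcont_xx : ContinuousOn (fun p : ℝ × ℝ => deriv (deriv (fun y => V y p.2)) p.1)
      (Set.univ ×ˢ Set.Icc 0 T))
    (hcont_xxx :
      ContinuousOn (fun p : ℝ × ℝ => deriv (deriv (deriv (fun y => V y p.2))) p.1)
      (Set.univ ×ˢ Set.Icc 0 T))
    (hcont_xxxx :
      ContinuousOn
        (fun p : ℝ × ℝ => deriv (deriv (deriv (deriv (fun y => V y p.2)))) p.1)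
      (Set.univ ×ˢ Set.Icc 0 T))
    (hcont_tx : ContinuousOn
      (fun p : ℝ × ℝ => deriv (fun s => deriv (fun y => V y s) p.1) p.2)
      (Set.univ ×ˢ Set.Icc 0 T))
    (hcont_txx : ContinuousOn
      (fun p : ℝ × ℝ => deriv (fun s => deriv (deriv (fun y => V y s)) p.1) p.2)
      (Set.univ ×ˢ Set.Icc 0 T))
    -- positivity of ∂_x V
    (hVxpos : ∀ x : ℝ, ∀ t ∈ Set.Icc (0 : ℝ) T, 0 < deriv (fun y => V y t) x)
    -- V solves the HJB equation on ℝ × [0,T)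
    (hHJB : ∀ x : ℝ, ∀ t ∈ Set.Ico (0 : ℝ) T,
      deriv (fun s => V x s) t +
        sSup ((fun θ => (μ θ - (1 / 2) * σ2 θ) * deriv (fun y => V y t) x +
          (1 / 2) * σ2 θ * deriv (deriv (fun y => V y t)) x) ''
            stdSimplex ℝ (Fin n)) = 0)
    -- β is assumed twice continuously differentiable
    (hβ : ContDiff ℝ 2 (betaHJB n μ σ2))
    -- φ is the Riccati transform
    (φ : ℝ → ℝ → ℝ)
    (hφ : ∀ x t : ℝ, φ x t =
      1 - deriv (deriv (fun y => V y t)) x / deriv (fun y => V y t) x) :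
    ∀ x : ℝ, ∀ t ∈ Set.Ico (0 : ℝ) T,
      deriv (fun s => φ x s) t +
        deriv (deriv (fun y => betaHJB n μ σ2 (φ y t))) x +
        deriv (fun y => (1 - φ y t) * betaHJB n μ σ2 (φ y t)) x = 0 :=
  hjb_riccati_transformation_general n μ σ2 T hT V hdiff hcont_tx hcont_txx hVxpos hHJB hβ φ hφ
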